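/- arXiv:2501.13393 — 5 statements merged into one kernel-verified Lean document; each statement's English description precedes it below -/
import Mathlib

section
/- The characteristic polynomial of the Grover algorithm matrix U = R_D R_f is det(λI_N - U) = (λ + 1)^{N-2} · (λ² - 2(1 - 2/N)λ + 1). -/
/-!
`U + I` has rank two: with `s = R_f 𝟙 = (-1, 1, …, 1)` one has `U + I = (2/N) 𝟙 sᵀ + 2 e₀ e₀ᵀ = A B`
for `A = [𝟙 | e₀]` of size `N × 2` and `B = [(2/N) sᵀ ; 2 e₀ᵀ]` of size `2 × N`. Sylvester's identity
`det (t I_N - A B) = t ^ (N - 2) * det (t I_2 - B A)` at `t = λ + 1` reduces the determinant to that of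
the `2 × 2` matrix `B A`, whose trace and determinant both equal `4 - 4/N`.
-/

/-- The Grover diffusion matrix `R_D = 2|D⟩⟨D| - I_N`. -/
noncomputable def groverRD (N : ℕ) : Matrix (Fin N) (Fin N) ℝ :=
  Matrix.of fun i j => 2 / (N : ℝ) - if i = j then 1 else 0

/-- The Grover oracle matrix `R_f = I_N - 2|0⟩⟨0|`. -/
def groverRf (N : ℕ) [NeZero N] : Matrix (Fin N) (Fin N) ℝ :=
  Matrix.diagonal fun i => if i = 0 then -1 else 1

/-- The Grover algorithm matrix `U = R_D R_f`. -/
noncomputable def groverU (N : ℕ) [NeZero N] : Matrix (Fin N) (Fin N) ℝ :=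
  groverRD N * groverRf N

open Matrix Polynomial

theorem Matrix.det_scalar_sub_mul_of_card_le {m n R : Type*} [Fintype m] [DecidableEq m]
    [Fintype n] [DecidableEq n] [CommRing R] (A : Matrix m n R) (B : Matrix n m R) (t : R)
    (hle : Fintype.card n ≤ Fintype.card m) :
    (scalar m t - A * B).det =
      t ^ (Fintype.card m - Fintype.card n) * (scalar n t - B * A).det := by
  rw [← eval_charpoly, ← eval_charpoly, charpoly_mul_comm_of_le A B hle, eval_mul, eval_pow,
    eval_X]

theorem Fin.sum_ite_eq_zero_neg_one_one {R : Type*} [CommRing R] (N : ℕ) [NeZero N] :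
    ∑ j : Fin N, (if j = 0 then -1 else 1 : R) = N - 2 := by
  rw [Finset.sum_ite, Finset.filter_eq', Finset.filter_ne']
  simp [Finset.card_erase_of_mem, Nat.cast_sub NeZero.one_le]
  ring

def groverCols (N : ℕ) [NeZero N] : Matrix (Fin N) (Fin 2) ℝ :=
  Matrix.of fun i => ![1, if i = 0 then 1 else 0]

noncomputable def groverRows (N : ℕ) [NeZero N] : Matrix (Fin 2) (Fin N) ℝ :=
  Matrix.of ![fun j => 2 / N * (if j = 0 then -1 else 1), fun j => if j = 0 then 2 else 0]

theorem groverU_eq_cols_mul_rows_sub_one (N : ℕ) [NeZero N] :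
    groverU N = groverCols N * groverRows N - 1 := by
  ext i j
  rw [groverU, groverRf, mul_diagonal]
  simp only [groverRD, groverCols, groverRows, mul_apply, Fin.sum_univ_two, Matrix.sub_apply,
    one_apply, of_apply]
  by_cases hi : i = 0 <;> by_cases hj : j = 0 <;> by_cases hij : i = j <;> simp_all; ring

theorem groverRows_mul_groverCols (N : ℕ) [NeZero N] :
    groverRows N * groverCols N = !![2 - 4 / (N : ℝ), -2 / N; 2, 2] := by
  have hN : (N : ℝ) ≠ 0 := NeZero.ne _
  ext i k
  fin_cases i <;> fin_cases k
  · simp only [groverRows, groverCols, mul_apply, of_apply, Fin.zero_eta, cons_val_zero, mul_one,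
      ← Finset.mul_sum, Fin.sum_ite_eq_zero_neg_one_one]
    field_simp
    ring
  all_goals simp [groverRows, groverCols, mul_apply, neg_div]

theorem stmt_5 (N : ℕ) [NeZero N] (hN : 2 ≤ N) (l : ℝ) :
    Matrix.det (l • (1 : Matrix (Fin N) (Fin N) ℝ) - groverU N) =
      (l + 1) ^ (N - 2) * (l ^ 2 - 2 * (1 - 2 / (N : ℝ)) * l + 1) := by
  have hshift : l • (1 : Matrix (Fin N) (Fin N) ℝ) - groverU N
      = scalar (Fin N) (l + 1) - groverCols N * groverRows N := by
    rw [groverU_eq_cols_mul_rows_sub_one, scalar_apply, ← smul_one_eq_diagonal, add_smul,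
      one_smul]
    abel
  rw [hshift, det_scalar_sub_mul_of_card_le _ _ _ (by simpa using hN), ← eval_charpoly,
    groverRows_mul_groverCols, charpoly_fin_two, Fintype.card_fin, Fintype.card_fin]
  congr 1
  simp [trace_fin_two, det_fin_two]
  ring
end

section
/- Every eigenvalue of the Grover algorithm matrix U_N is either -1 or one of e^{±iξ} where cos ξ = 1 - 2/N; precisely, the spectrum of U_N (with multiplicity) is {[-1]^{N-2}, [e^{iξ}]¹, [e^{-iξ}]¹}. -/
open Polynomial

/-! Write `σ = (-1, 1, …, 1)` for the diagonal of `R_f`. Then `U_N = (2/N) 𝟙 σᵀ - diag σ`, so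
`z I - U_N` is the diagonal matrix `diag (z + σ)` plus a rank-one matrix. For `z ≠ ±1` the matrix
determinant lemma gives `det (z I - U_N) = (z + 1)^(N-2) (z² - (2 - 4/N) z + 1)`, and two
polynomials that agree off `{1, -1}` are equal. As `2 - 4/N = 2 cos ξ = e^{iξ} + e^{-iξ}` and
`e^{iξ} e^{-iξ} = 1`, the quadratic factor is `(z - e^{iξ}) (z - e^{-iξ})`; the spectrum is the
set of roots of the characteristic polynomial. -/

open Matrix

theorem det_diagonal_add_vecMulVec {K n : Type*} [Field K] [Fintype n] [DecidableEq n]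
    {d : n → K} (hd : ∀ i, d i ≠ 0) (u v : n → K) :
    (diagonal d + vecMulVec u v).det = (∏ i, d i) * (1 + ∑ i, v i * u i / d i) := by
  have hfac : diagonal d + vecMulVec u v =
      diagonal d * (1 + vecMulVec (fun i => u i / d i) v) := by
    ext i j
    rw [Matrix.mul_add, Matrix.mul_one, Matrix.add_apply, Matrix.add_apply, diagonal_mul,
      vecMulVec_apply, vecMulVec_apply, ← mul_assoc, mul_div_cancel₀ _ (hd i)]
  rw [hfac, det_mul, det_diagonal, vecMulVec_eq Unit, det_one_add_replicateCol_mul_replicateRow,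
    dotProduct]
  simp only [mul_div_assoc]

theorem X_sq_sub_C_two_cos_mul_X_add_one (z : ℂ) :
    (X ^ 2 - C (2 * Complex.cos z) * X + 1 : ℂ[X]) =
      (X - C (Complex.exp (z * Complex.I))) * (X - C (Complex.exp (-z * Complex.I))) := by
  have hprod : C (Complex.exp (z * Complex.I)) * C (Complex.exp (-z * Complex.I)) = 1 := by
    rw [← C_mul, ← Complex.exp_add, neg_mul, add_neg_cancel, Complex.exp_zero, C_1]
  rw [Complex.two_cos, C_add]
  linear_combination -hprod

def groverSign (N : ℕ) [NeZero N] : Fin N → ℂ := fun i => if i = 0 then -1 else 1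

theorem scalar_sub_groverU (N : ℕ) [NeZero N] (z : ℂ) :
    scalar (Fin N) z - (groverU N).map Complex.ofReal =
      diagonal (fun i => z + groverSign N i) +
        vecMulVec (fun _ => -(2 / N : ℂ)) (groverSign N) := by
  ext i j
  simp only [groverU, groverRD, groverRf, groverSign, scalar_apply, Matrix.sub_apply,
    Matrix.add_apply, map_apply, mul_diagonal, diagonal_apply, of_apply, vecMulVec_apply]
  rcases eq_or_ne i j with rfl | hij
  · split_ifs <;> push_cast <;> ring
  · simp only [if_neg hij]
    split_ifs <;> push_cast <;> ring

theorem prod_groverSign {M : Type*} [CommMonoid M] (m : ℕ) (f : ℂ → M) :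
    ∏ i, f (groverSign (m + 2) i) = f (-1) * f 1 ^ (m + 1) := by
  simp [Fin.prod_univ_succ (n := m + 1), groverSign, Fin.succ_ne_zero]

theorem sum_groverSign {M : Type*} [AddCommMonoid M] (m : ℕ) (f : ℂ → M) :
    ∑ i, f (groverSign (m + 2) i) = f (-1) + (m + 1) • f 1 := by
  simp [Fin.sum_univ_succ (n := m + 1), groverSign, Fin.succ_ne_zero]

theorem eval_charpoly_groverU (m : ℕ) {z : ℂ} (hz₁ : z ≠ 1) (hz₂ : z ≠ -1) :
    ((groverU (m + 2)).map Complex.ofReal).charpoly.eval z =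
      (z + 1) ^ m * (z ^ 2 - (2 - 4 / (m + 2)) * z + 1) := by
  have hsub : z - 1 ≠ 0 := sub_ne_zero.mpr hz₁
  have hadd : z + 1 ≠ 0 := by rwa [← sub_neg_eq_add, sub_ne_zero]
  have hsign : ∀ i, z + groverSign (m + 2) i ≠ 0 := by
    intro i
    unfold groverSign
    split_ifs
    · rwa [← sub_eq_add_neg]
    · exact hadd
  rw [eval_charpoly, scalar_sub_groverU, det_diagonal_add_vecMulVec hsign,
    prod_groverSign m (fun s => z + s), sum_groverSign m (fun s => s * -(2 / _) / (z + s))]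
  have hm : (m : ℂ) + 2 ≠ 0 := by exact_mod_cast (m + 1).succ_ne_zero
  rw [← sub_eq_add_neg, pow_succ, nsmul_eq_mul]
  push_cast
  field_simp
  ring

theorem charpoly_groverU (m : ℕ) :
    ((groverU (m + 2)).map Complex.ofReal).charpoly =
      (X + 1) ^ m * (X ^ 2 - C (2 - 4 / (m + 2) : ℂ) * X + 1) := by
  refine eq_of_infinite_eval_eq _ _ ((Set.toFinite ({1, -1} : Set ℂ)).infinite_compl.mono ?_)
  intro z hz
  simp only [Set.mem_compl_iff, Set.mem_insert_iff, Set.mem_singleton_iff, not_or] at hz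
  simp [eval_charpoly_groverU m hz.1 hz.2]

theorem stmt_6_general (N : ℕ) [NeZero N] (hN : 2 ≤ N) (ξ : ℝ)
    (hcos : Real.cos ξ = 1 - 2 / (N : ℝ)) :
    Matrix.charpoly ((groverU N).map (Complex.ofReal)) =
      (X + 1) ^ (N - 2) * (X - C (Complex.exp (ξ * Complex.I))) *
        (X - C (Complex.exp (-ξ * Complex.I))) ∧
    ∀ μ ∈ spectrum ℂ ((groverU N).map (Complex.ofReal)),
      μ = -1 ∨ μ = Complex.exp (ξ * Complex.I) ∨ μ = Complex.exp (-ξ * Complex.I) := by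
  obtain ⟨m, rfl⟩ : ∃ m, N = m + 2 := ⟨N - 2, by omega⟩
  have hcoeff : (2 - 4 / (m + 2) : ℂ) = 2 * Complex.cos ξ := by
    rw [← Complex.ofReal_cos, hcos]
    push_cast
    ring
  have hcharpoly : ((groverU (m + 2)).map Complex.ofReal).charpoly =
      (X + 1) ^ (m + 2 - 2) * (X - C (Complex.exp (ξ * Complex.I))) *
        (X - C (Complex.exp (-ξ * Complex.I))) := by
    rw [charpoly_groverU, hcoeff, X_sq_sub_C_two_cos_mul_X_add_one, Nat.add_sub_cancel, mul_assoc]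
  refine ⟨hcharpoly, fun μ hμ => ?_⟩
  rw [mem_spectrum_iff_isRoot_charpoly, hcharpoly] at hμ
  simp only [IsRoot.def, eval_mul, eval_pow, eval_add, eval_sub, eval_X, eval_C, eval_one,
    mul_eq_zero, pow_eq_zero_iff', add_eq_zero_iff_eq_neg, sub_eq_zero] at hμ
  tauto

/-- The spectrum of `U_N` with multiplicity is `{[-1]^{N-2}, [e^{iξ}]^1, [e^{-iξ}]^1}`
where `cos ξ = 1 - 2/N`: the characteristic polynomial over `ℂ` factors accordingly.
In particular every eigenvalue of `U_N` is `-1`, `e^{iξ}`, or `e^{-iξ}`. -/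
theorem stmt_6 (N : ℕ) [NeZero N] (hN : 2 ≤ N) (ξ : ℝ) (hξ : ξ ∈ Set.Icc 0 Real.pi)
    (hcos : Real.cos ξ = 1 - 2 / (N : ℝ)) :
    Matrix.charpoly ((groverU N).map (Complex.ofReal)) =
      (X + 1) ^ (N - 2) * (X - C (Complex.exp (ξ * Complex.I))) *
        (X - C (Complex.exp (-ξ * Complex.I))) ∧
    ∀ μ ∈ spectrum ℂ ((groverU N).map (Complex.ofReal)),
      μ = -1 ∨ μ = Complex.exp (ξ * Complex.I) ∨ μ = Complex.exp (-ξ * Complex.I) :=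
  stmt_6_general N hN ξ hcos
end

section
/- For every integer N ≥ 2 with N ≠ 2 and N ≠ 4, the Grover algorithm matrix U_N has infinite period, i.e., U_N^t ≠ I_N for all t ≥ 1. -/
/-
For a root `z` of the quadratic factor `z² - 2(1 - 2/N)z + 1` of the characteristic polynomial,
`(z - 1)·𝟙 + 2e₀` is an eigenvector of `U_N` with eigenvalue `z`, so `U_N^t = 1` forces `z^t = 1`.
Then `z` and `z⁻¹` are algebraic integers, hence so is the rational number `z + z⁻¹ = 2 - 4/N`,
which must therefore be an integer; this happens only for `N ∣ 4`.
-/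

open Matrix Complex

theorem Matrix.pow_mulVec_of_mulVec_eq_smul {n R : Type*} [Fintype n] [DecidableEq n]
    [CommSemiring R] {A : Matrix n n R} {v : n → R} {z : R} (h : A *ᵥ v = z • v) (t : ℕ) :
    A ^ t *ᵥ v = z ^ t • v := by
  induction t with
  | zero => simp
  | succ t ih => rw [pow_succ', ← mulVec_mulVec, ih, mulVec_smul, h, smul_smul, pow_succ]

theorem Matrix.pow_eq_one_of_mulVec_eq_smul {n K : Type*} [Fintype n] [DecidableEq n]
    [Field K] {A : Matrix n n K} {v : n → K} {z : K} (h : A *ᵥ v = z • v) (hv : v ≠ 0)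
    {t : ℕ} (hA : A ^ t = 1) : z ^ t = 1 := by
  have hfix : (z ^ t - 1) • v = 0 := by
    rw [sub_smul, one_smul, ← pow_mulVec_of_mulVec_eq_smul h, hA, one_mulVec, sub_self]
  exact sub_eq_zero.mp ((smul_eq_zero.mp hfix).resolve_right hv)

theorem exists_int_eq_of_pow_eq_one_of_add_inv_eq {K : Type*} [Field K] [CharZero K] {z : K}
    {t : ℕ} (ht : 0 < t) (hz : z ^ t = 1) {q : ℚ} (hq : z + z⁻¹ = q) : ∃ k : ℤ, q = k := by
  have hzi : IsIntegral ℤ z := IsIntegral.of_pow ht (by rw [hz]; exact isIntegral_one)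
  have hzinv : IsIntegral ℤ z⁻¹ :=
    IsIntegral.of_pow ht (by rw [inv_pow, hz, inv_one]; exact isIntegral_one)
  obtain ⟨k, hk⟩ := ((hzi.add hzinv).exists_int_iff_exists_rat).mp ⟨q, hq⟩
  exact ⟨k, by exact_mod_cast hq.symm.trans hk⟩

section Grover

variable {N : ℕ}

theorem groverRD_map_mulVec (v : Fin N → ℂ) :
    (groverRD N).map ofRealHom *ᵥ v = (2 / N * ∑ i, v i) • 1 - v := by
  funext i
  simp only [groverRD, mulVec, dotProduct, map_apply, of_apply]
  simp [apply_ite ofReal, sub_mul, Finset.sum_sub_distrib, Finset.mul_sum]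

theorem groverRf_map_mulVec [NeZero N] (v : Fin N → ℂ) :
    (groverRf N).map ofRealHom *ᵥ v = v - Pi.single 0 (2 * v 0) := by
  funext i
  rcases eq_or_ne i 0 with rfl | hi
  · simp [groverRf, mulVec_diagonal]; ring
  · simp [groverRf, mulVec_diagonal, hi]

theorem groverU_map_mulVec_eigenvector [NeZero N] {z : ℂ}
    (hz : z ^ 2 - 2 * (1 - 2 / N) * z + 1 = 0) :
    (groverU N).map ofRealHom *ᵥ ((z - 1) • 1 + Pi.single 0 2) =
      z • ((z - 1) • 1 + Pi.single 0 2) := by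
  have hN : (N : ℂ) ≠ 0 := Nat.cast_ne_zero.mpr (NeZero.ne N)
  rw [groverU, Matrix.map_mul, ← mulVec_mulVec, groverRf_map_mulVec, groverRD_map_mulVec]
  funext i
  by_cases hi : i = 0 <;> simp [Finset.sum_add_distrib, hi] <;> field_simp at hz ⊢ <;>
    linear_combination -hz

theorem pow_eq_one_of_groverU_pow_eq_one [NeZero N] (hN : 2 ≤ N) {z : ℂ}
    (hz : z ^ 2 - 2 * (1 - 2 / N) * z + 1 = 0) {t : ℕ} (hU : groverU N ^ t = 1) : z ^ t = 1 := by
  have hz1 : z ≠ 1 := by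
    rintro rfl
    have : (4 / N : ℂ) = 0 := by linear_combination hz
    simp [NeZero.ne N] at this
  have hv : (z - 1) • (1 : Fin N → ℂ) + Pi.single 0 2 ≠ 0 := by
    have h10 : (⟨1, hN⟩ : Fin N) ≠ 0 := by simp [Fin.ext_iff]
    intro h
    simpa [h10, sub_eq_zero, hz1] using congrFun h ⟨1, hN⟩
  refine pow_eq_one_of_mulVec_eq_smul (groverU_map_mulVec_eigenvector hz) hv ?_
  rw [← Matrix.map_pow, hU, Matrix.map_one _ (map_zero _) (map_one _)]

end Grover

/-- For `N ≥ 2` with `N ≠ 2, 4`, the Grover algorithm matrix has infinite period. -/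
theorem stmt_10 (N : ℕ) [NeZero N] (hN : 2 ≤ N) (h2 : N ≠ 2) (h4 : N ≠ 4) :
    ∀ t : ℕ, 1 ≤ t → groverU N ^ t ≠ 1 := by
  intro t ht hU
  have hN0 : (N : ℂ) ≠ 0 := Nat.cast_ne_zero.mpr (NeZero.ne N)
  obtain ⟨z, hz⟩ : ∃ z : ℂ, z ^ 2 - 2 * (1 - 2 / N) * z + 1 = 0 := by
    obtain ⟨z, hz⟩ := exists_quadratic_eq_zero (b := -2 * (1 - 2 / (N : ℂ))) (c := 1)
      one_ne_zero (IsAlgClosed.exists_eq_mul_self _)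
    exact ⟨z, by linear_combination hz⟩
  have hz0 : z ≠ 0 := by rintro rfl; norm_num at hz
  have hsum : z + z⁻¹ = ((2 - 4 / N : ℚ) : ℂ) := by
    push_cast
    field_simp at hz ⊢
    linear_combination hz
  obtain ⟨k, hk⟩ := exists_int_eq_of_pow_eq_one_of_add_inv_eq ht
    (pow_eq_one_of_groverU_pow_eq_one hN hz hU) hsum
  have hdvd : (N : ℤ) ∣ 4 := ⟨2 - k, by qify; field_simp at hk; linarith⟩
  have := Nat.le_of_dvd (by norm_num) (Int.natCast_dvd_natCast.mp hdvd)
  interval_cases N <;> omega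
end

section
/- The quadratic x² - 2(1 - 2/N)x + 1 with N ∈ ℤ, N ≥ 2, has all roots equal to roots of unity if and only if N ∈ {2, 4}; for N = 2 it equals Φ₄(x) = x² + 1 and for N = 4 it equals Φ₆(x) = x² - x + 1. -/
/-!
A root `z` of `x² - b x + 1` is nonzero with `b = z + z⁻¹`, so if `z` is a root of unity then `b`
is an algebraic integer. For `b = 2 - 4/N` rational this means `b ∈ ℤ`, i.e. `N ∣ 4`, which leaves
`N ∈ {2, 4}`. Conversely, for these `N` the quadratic is `Φ₄` resp. `Φ₆`, whose roots are
primitive roots of unity.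
-/

open Polynomial

lemma isIntegral_of_pow_eq_one {R A : Type*} [CommRing R] [Ring A] [Algebra R A] {z : A} {n : ℕ}
    (hn : 0 < n) (hz : z ^ n = 1) : IsIntegral R z :=
  IsIntegral.of_pow hn (hz ▸ isIntegral_one)

lemma isIntegral_add_inv_of_pow_eq_one {K : Type*} [Field K] {z : K} {n : ℕ} (hn : 0 < n)
    (hz : z ^ n = 1) : IsIntegral ℤ (z + z⁻¹) :=
  (isIntegral_of_pow_eq_one hn hz).add (isIntegral_of_pow_eq_one hn (by rw [inv_pow, hz, inv_one]))

lemma exists_intCast_eq_of_isIntegral_ratCast {K : Type*} [Field K] [CharZero K] {q : ℚ}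
    (h : IsIntegral ℤ (q : K)) : ∃ m : ℤ, (m : ℚ) = q := by
  rw [← eq_ratCast (algebraMap ℚ K), isIntegral_algebraMap_iff (algebraMap ℚ K).injective,
    IsIntegrallyClosed.isIntegral_iff] at h
  exact h

lemma exists_quadratic_root_of_isAlgClosed {K : Type*} [Field K] [IsAlgClosed K] [NeZero (2 : K)]
    (b c : K) : ∃ z : K, z ^ 2 - b * z + c = 0 := by
  obtain ⟨z, hz⟩ := exists_quadratic_eq_zero one_ne_zero
    (IsAlgClosed.exists_eq_mul_self (discrim 1 (-b) c))
  exact ⟨z, by linear_combination hz⟩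

lemma isIntegral_of_forall_root_pow_eq_one {K : Type*} [Field K] [IsAlgClosed K] [NeZero (2 : K)]
    {b : K} (h : ∀ z : K, z ^ 2 - b * z + 1 = 0 → ∃ n, 0 < n ∧ z ^ n = 1) : IsIntegral ℤ b := by
  obtain ⟨z, hz⟩ := exists_quadratic_root_of_isAlgClosed b 1
  obtain ⟨n, hn, hzn⟩ := h z hz
  have hz0 : z ≠ 0 := by rintro rfl; simp at hz
  have hb : b = z + z⁻¹ := by field_simp; linear_combination -hz
  exact hb ▸ isIntegral_add_inv_of_pow_eq_one hn hzn

lemma eq_two_or_eq_four_of_intCast_eq {N m : ℤ} (hN : 2 ≤ N) (hm : (m : ℚ) = 2 * (1 - 2 / N)) :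
    N = 2 ∨ N = 4 := by
  have hN0 : (N : ℚ) ≠ 0 := by exact_mod_cast (by omega : N ≠ 0)
  have hmN : m * N = 2 * N - 4 := by
    field_simp at hm
    exact_mod_cast (by linear_combination hm : (m : ℚ) * N = 2 * N - 4)
  have hdvd : N ∣ 4 := ⟨2 - m, by linear_combination hmN⟩
  have := Int.le_of_dvd (by norm_num) hdvd
  interval_cases N <;> simp_all

lemma Polynomial.cyclotomic_four (R : Type*) [CommRing R] : cyclotomic 4 R = X ^ 2 + 1 := by
  rw [← cyclotomic_expand_eq_cyclotomic Nat.prime_two (dvd_refl 2), cyclotomic_two]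
  simp

lemma pow_eq_one_of_isRoot_cyclotomic {R : Type*} [CommRing R] [IsDomain R] [CharZero R] {n : ℕ}
    (hn : 0 < n) {z : R} (hz : (cyclotomic n R).IsRoot z) : z ^ n = 1 :=
  ((isRoot_cyclotomic_iff_charZero hn).1 hz).pow_eq_one

/-- The quadratic `x² - 2(1 - 2/N)x + 1` (`N ∈ ℤ`, `N ≥ 2`) has all roots equal to
roots of unity iff `N ∈ {2, 4}`; for `N = 2` it is `Φ₄(x) = x² + 1` and for
`N = 4` it is `Φ₆(x) = x² - x + 1`. -/
theorem stmt_14 (N : ℤ) (hN : 2 ≤ N) :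
    ((∀ z : ℂ, z ^ 2 - 2 * (1 - 2 / (N : ℂ)) * z + 1 = 0 →
        ∃ n : ℕ, 0 < n ∧ z ^ n = 1) ↔ (N = 2 ∨ N = 4)) ∧
    (N = 2 → (Polynomial.X ^ 2 - Polynomial.C (2 * (1 - 2 / (N : ℚ))) * Polynomial.X + 1)
        = Polynomial.cyclotomic 4 ℚ) ∧
    (N = 4 → (Polynomial.X ^ 2 - Polynomial.C (2 * (1 - 2 / (N : ℚ))) * Polynomial.X + 1)
        = Polynomial.cyclotomic 6 ℚ) := by
  refine ⟨⟨fun h ↦ ?_, ?_⟩, by rintro rfl; rw [cyclotomic_four]; norm_num,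
    by rintro rfl; rw [cyclotomic_six]; norm_num⟩
  · have hb : ((2 * (1 - 2 / N) : ℚ) : ℂ) = 2 * (1 - 2 / (N : ℂ)) := by push_cast; rfl
    obtain ⟨m, hm⟩ := exists_intCast_eq_of_isIntegral_ratCast
      (hb ▸ isIntegral_of_forall_root_pow_eq_one h)
    exact eq_two_or_eq_four_of_intCast_eq hN hm
  · rintro (rfl | rfl) z hz <;> norm_num at hz
    · exact ⟨4, by norm_num, pow_eq_one_of_isRoot_cyclotomic (by norm_num) (by
        simp [cyclotomic_four, hz])⟩
    · exact ⟨6, by norm_num, pow_eq_one_of_isRoot_cyclotomic (by norm_num) (by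
        simp only [cyclotomic_six, IsRoot, eval_add, eval_sub, eval_pow, eval_X, eval_one]
        linear_combination hz)⟩
end

section
/- The matrix zeta function of the Grover algorithm matrix satisfies the absolute automorphy relation ζ_{U_N}(1/u) = (-1)^N det(U_N) · u^N · ζ_{U_N}(u), and (-1)^N det(U_N) ∈ {-1, 1}; hence ζ_{U_N} is an absolute automorphic form of weight -N. -/
/-- The matrix zeta function `ζ_{U_N}(u) = det(I_N - u U_N)⁻¹`. -/
noncomputable def groverZeta (N : ℕ) [NeZero N] (u : ℝ) : ℝ :=
  (Matrix.det (1 - u • groverU N))⁻¹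

/-!
An orthogonal matrix satisfies `1 - u • U = (-u) • U * (1 - u⁻¹ • Uᵀ)`; taking determinants and
using `det Uᵀ = det U` gives `det (1 - u • U) = (-1)^N det U u^N det (1 - u⁻¹ • U)`, which is the
functional equation after inverting. Orthogonality also forces `det U = ±1`. The Grover matrix is
orthogonal as a product of two symmetric involutions.
-/

open Matrix

namespace Matrix

variable {n : Type*} [Fintype n] [DecidableEq n]

theorem mem_orthogonalGroup_of_transpose_eq_of_mul_self_eq_one {R : Type*} [CommRing R]
    {A : Matrix n n R} (hsymm : Aᵀ = A) (hinv : A * A = 1) : A ∈ orthogonalGroup n R :=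
  (mem_orthogonalGroup_iff n R).2 (by rw [hsymm, hinv])

theorem det_mul_self_of_mem_orthogonalGroup {R : Type*} [CommRing R] {U : Matrix n n R}
    (hU : U ∈ orthogonalGroup n R) : det U * det U = 1 := by
  simpa only [det_mul, det_transpose, det_one] using
    congrArg det ((mem_orthogonalGroup_iff n R).1 hU)

theorem det_one_sub_smul_of_mem_orthogonalGroup {K : Type*} [Field K] {U : Matrix n n K}
    (hU : U ∈ orthogonalGroup n K) {u : K} (hu : u ≠ 0) :
    det (1 - u • U) = (-1) ^ Fintype.card n * det U * u ^ Fintype.card n * det (1 - u⁻¹ • U) := by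
  have hfactor : 1 - u • U = (-u) • (U * (1 - u⁻¹ • Uᵀ)) := by
    rw [Matrix.mul_sub, mul_one, Matrix.mul_smul, (mem_orthogonalGroup_iff n K).1 hU, smul_sub,
      smul_smul, neg_mul, mul_inv_cancel₀ hu, neg_smul, neg_smul, one_smul]
    abel
  have htranspose : 1 - u⁻¹ • Uᵀ = (1 - u⁻¹ • U)ᵀ := by
    rw [transpose_sub, transpose_one, transpose_smul]
  rw [hfactor, det_smul, det_mul, htranspose, det_transpose, neg_pow]
  ring

end Matrix

theorem sub_one_mul_self_eq_one {R : Type*} [Ring R] {p : R} (h : p * p = p + p) :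
    (p - 1) * (p - 1) = 1 := by
  calc (p - 1) * (p - 1) = p * p - (p + p) + 1 := by noncomm_ring
    _ = 1 := by rw [h, sub_self, zero_add]

lemma groverRD_eq (N : ℕ) : groverRD N = Matrix.of (fun _ _ => 2 / (N : ℝ)) - 1 := by
  ext i j
  simp [groverRD, one_apply]

lemma groverRD_transpose (N : ℕ) : (groverRD N)ᵀ = groverRD N := by
  ext i j
  simp [groverRD, eq_comm]

lemma groverRD_mul_self (N : ℕ) : groverRD N * groverRD N = 1 := by
  rw [groverRD_eq]
  refine sub_one_mul_self_eq_one ?_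
  ext i j
  rcases eq_or_ne N 0 with rfl | hN
  · exact i.elim0
  · simp only [mul_apply, of_apply, Matrix.add_apply, Finset.sum_const, Finset.card_univ,
      Fintype.card_fin, nsmul_eq_mul]
    field_simp
    ring

lemma groverRf_mul_self (N : ℕ) [NeZero N] : groverRf N * groverRf N = 1 := by
  rw [groverRf, diagonal_mul_diagonal, ← diagonal_one]
  congr 1
  ext i
  split_ifs <;> norm_num

lemma groverU_mem_orthogonalGroup (N : ℕ) [NeZero N] :
    groverU N ∈ orthogonalGroup (Fin N) ℝ :=
  Submonoid.mul_mem _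
    (mem_orthogonalGroup_of_transpose_eq_of_mul_self_eq_one (groverRD_transpose N)
      (groverRD_mul_self N))
    (mem_orthogonalGroup_of_transpose_eq_of_mul_self_eq_one (diagonal_transpose _)
      (groverRf_mul_self N))

theorem stmt_16_general (N : ℕ) [NeZero N] :
    (∀ u : ℝ, u ≠ 0 → Matrix.det (1 - u • groverU N) ≠ 0 →
      groverZeta N u⁻¹ =
        (-1) ^ N * Matrix.det (groverU N) * u ^ N * groverZeta N u) ∧
    ((-1) ^ N * Matrix.det (groverU N) = 1 ∨
      (-1) ^ N * Matrix.det (groverU N) = -1) := by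
  have hU := groverU_mem_orthogonalGroup N
  set ε := (-1) ^ N * Matrix.det (groverU N)
  have hε : ε * ε = 1 := by
    rw [mul_mul_mul_comm, ← mul_pow, neg_one_mul, neg_neg, one_pow,
      det_mul_self_of_mem_orthogonalGroup hU, one_mul]
  refine ⟨fun u hu _ => ?_, mul_self_eq_one_iff.1 hε⟩
  have hεu : ε * u ^ N ≠ 0 := mul_ne_zero (left_ne_zero_of_mul_eq_one hε) (pow_ne_zero N hu)
  rw [groverZeta, groverZeta, det_one_sub_smul_of_mem_orthogonalGroup hU hu, Fintype.card_fin,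
    mul_inv, ← mul_assoc, mul_inv_cancel₀ hεu, one_mul]

/-- Absolute automorphy: `ζ_{U_N}(1/u) = (-1)^N det(U_N) u^N ζ_{U_N}(u)` (for
`u ≠ 0` with `det(I - u U_N) ≠ 0`) and `(-1)^N det(U_N) ∈ {-1, 1}`, so `ζ_{U_N}`
is an absolute automorphic form of weight `-N`. -/
theorem stmt_16 (N : ℕ) [NeZero N] (hN : 2 ≤ N) :
    (∀ u : ℝ, u ≠ 0 → Matrix.det (1 - u • groverU N) ≠ 0 →
      groverZeta N u⁻¹ =
        (-1) ^ N * Matrix.det (groverU N) * u ^ N * groverZeta N u) ∧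
    ((-1) ^ N * Matrix.det (groverU N) = 1 ∨
      (-1) ^ N * Matrix.det (groverU N) = -1) :=
  stmt_16_general N
end
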